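/- arXiv:2507.07823 — 2 statements merged into one kernel-verified Lean document; each statement's English description precedes it below -/
import Mathlib

section
/- For every real b > 0 and every real ω, ∫_{-1}^{1} I₀(b√(1-t²)) e^{iωt} dt = 2 sinc(√(ω² - b²)), where for ω² < b² the right-hand side is interpreted via sinc(iz) = sinh(z)/z, i.e., equals 2 sinh(√(b²-ω²))/√(b²-ω²). -/
open Real intervalIntegral

/-- Modified Bessel function of the first kind of order zero,
via its standard integral representation. -/
noncomputable def besselI0 (x : ℝ) : ℝ :=
  (1 / Real.pi) * ∫ θ in (0:ℝ)..Real.pi, Real.exp (x * Real.cos θ)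

/-- `sinc z = sin z / z`, `sinc 0 = 1`. -/
noncomputable def sinc (x : ℝ) : ℝ := if x = 0 then 1 else Real.sin x / x

/-!
Expand `I₀(b √(1 - t²)) = ∑ₖ (b²/4)ᵏ (1 - t²)ᵏ / (k!)²` and `exp (i ω t) = ∑ₘ (i ω t)ᵐ / m!`
and integrate the double series termwise over `[-1, 1]`, where its terms are dominated by those
of the convergent product series `∑ (b²/4)ᵏ/(k!)² · |ω|ᵐ/m!`. Odd `m` contribute nothing, and
the Beta integrals `∫ t^(2n) (1 - t²)ᵏ` turn the `(k, n)` term into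
`2 C(k + n, k) (b²)ᵏ (-ω²)ⁿ / (2(k + n) + 1)!`. Summing along the antidiagonals `k + n = j`,
the binomial theorem leaves `∑ⱼ 2 (b² - ω²)ʲ / (2j + 1)!`, the series of `2 sinc √(ω² - b²)`,
resp. of `2 sinh √(b² - ω²) / √(b² - ω²)`.

The series of `I₀` itself comes from expanding `exp (x cos θ)` and Wallis' integrals
`∫₀^π cos θ ^ (2k) dθ`.
-/

open Finset Nat

theorem hasSum_intervalIntegral_of_summable_bound {ι E : Type*} [Countable ι]
    [NormedAddCommGroup E] [NormedSpace ℝ E] {F : ι → ℝ → E} {f : ℝ → E} {a b : ℝ}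
    {M : ι → ℝ} (hF : ∀ i, Continuous (F i)) (hM : Summable M)
    (hFM : ∀ i, ∀ t ∈ Set.uIcc a b, ‖F i t‖ ≤ M i)
    (hf : ∀ t ∈ Set.uIcc a b, HasSum (fun i ↦ F i t) (f t)) :
    HasSum (fun i ↦ ∫ t in a..b, F i t) (∫ t in a..b, f t) :=
  intervalIntegral.hasSum_integral_of_dominated_convergence (fun i _ ↦ M i)
    (fun i ↦ (hF i).aestronglyMeasurable)
    (fun i ↦ .of_forall fun t ht ↦ hFM i t (Set.uIoc_subset_uIcc ht))
    (.of_forall fun _ _ ↦ hM) intervalIntegrable_const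
    (.of_forall fun t ht ↦ hf t (Set.uIoc_subset_uIcc ht))

theorem hasSum_two_mul_of_odd_eq_zero {M : Type*} [AddCommMonoid M] [TopologicalSpace M]
    {f : ℕ → M} {a : M} (hf : HasSum f a) (hodd : ∀ n, f (2 * n + 1) = 0) :
    HasSum (fun n ↦ f (2 * n)) a :=
  (Function.Injective.hasSum_iff (f := f) (fun _ _ h ↦ by simpa using h) fun m hm ↦ by
    obtain ⟨n, rfl | rfl⟩ := Nat.even_or_odd' m
    · exact absurd ⟨n, rfl⟩ hm
    · exact hodd n).mpr hf

theorem hasSum_prodMap_two_mul_of_odd_eq_zero {β M : Type*} [AddCommMonoid M]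
    [TopologicalSpace M] {f : β × ℕ → M} {a : M} (hf : HasSum f a)
    (hodd : ∀ b n, f (b, 2 * n + 1) = 0) :
    HasSum (fun p : β × ℕ ↦ f (p.1, 2 * p.2)) a :=
  (Function.Injective.hasSum_iff (g := Prod.map id (2 * ·)) (f := f)
    (Function.injective_id.prodMap (mul_right_injective₀ two_ne_zero))
    fun (⟨b, m⟩ : β × ℕ) hm ↦ by
      obtain ⟨n, rfl | rfl⟩ := Nat.even_or_odd' m
      · exact absurd ⟨(b, n), rfl⟩ hm
      · exact hodd b n).mpr hf

theorem HasSum.sum_antidiagonal {M : Type*} [AddCommMonoid M] [TopologicalSpace M]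
    [ContinuousAdd M] [RegularSpace M] {f : ℕ × ℕ → M} {a : M} (hf : HasSum f a) :
    HasSum (fun n ↦ ∑ p ∈ antidiagonal n, f p) a :=
  ((HasAntidiagonal.sigmaAntidiagonalEquivProd (A := ℕ)).hasSum_iff.mpr hf).sigma fun n ↦ by
    rw [← sum_coe_sort]
    exact hasSum_fintype _

theorem Real.hasSum_sinc (s : ℝ) : HasSum (fun j ↦ (-s ^ 2) ^ j / (2 * j + 1)!) (Real.sinc s) := by
  rcases eq_or_ne s 0 with rfl | hs
  · convert hasSum_ite_eq 0 (1 : ℝ) using 2 with j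
    · rcases eq_or_ne j 0 with rfl | hj <;> simp [*]
    · exact Real.sinc_zero
  · rw [Real.sinc_of_ne_zero hs]
    refine ((Real.hasSum_sin s).div_const s).congr_fun fun j ↦ ?_
    rw [neg_pow, ← pow_mul, pow_succ]
    field_simp

theorem Real.hasSum_sinh_div {s : ℝ} (hs : s ≠ 0) :
    HasSum (fun j ↦ (s ^ 2) ^ j / (2 * j + 1)!) (sinh s / s) := by
  refine ((Real.hasSum_sinh s).div_const s).congr_fun fun j ↦ ?_
  rw [← pow_mul, pow_succ]
  field_simp

theorem integral_cos_pow_two_mul (k : ℕ) :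
    ∫ θ in (0:ℝ)..π, cos θ ^ (2 * k) = π * (2 * k)! / (4 ^ k * (k ! : ℝ) ^ 2) := by
  induction k with
  | zero => simp
  | succ k ih =>
    rw [show 2 * (k + 1) = 2 * k + 2 by omega, integral_cos_pow, ih, factorial_succ,
      show 2 * k + 2 = (2 * k + 1) + 1 by omega, factorial_succ, factorial_succ]
    simp only [sin_pi, sin_zero, mul_zero, sub_zero, zero_div, zero_add]
    push_cast
    field_simp
    ring

theorem integral_cos_pow_two_mul_add_one (k : ℕ) :
    ∫ θ in (0:ℝ)..π, cos θ ^ (2 * k + 1) = 0 := by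
  induction k with
  | zero => simp
  | succ k ih => rw [show 2 * (k + 1) + 1 = 2 * k + 1 + 2 by omega, integral_cos_pow, ih]; simp

theorem hasSum_besselI0 (x : ℝ) :
    HasSum (fun k ↦ (x ^ 2 / 4) ^ k / (k ! : ℝ) ^ 2) (besselI0 x) := by
  have hexp : HasSum (fun m ↦ ∫ θ in (0:ℝ)..π, (x * cos θ) ^ m / m !)
      (∫ θ in (0:ℝ)..π, exp (x * cos θ)) := by
    refine hasSum_intervalIntegral_of_summable_bound (M := fun m ↦ |x| ^ m / m !)
      (fun m ↦ by fun_prop) (Real.summable_pow_div_factorial |x|) (fun m θ _ ↦ ?_)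
      fun θ _ ↦ by
        simpa [Real.exp_eq_exp_ℝ] using NormedSpace.expSeries_div_hasSum_exp (x * cos θ)
    rw [norm_div, norm_pow, RCLike.norm_natCast, Real.norm_eq_abs, abs_mul]
    gcongr
    exact mul_le_of_le_one_right (abs_nonneg x) (abs_cos_le_one θ)
  have hterm (m : ℕ) : ∫ θ in (0:ℝ)..π, (x * cos θ) ^ m / m ! =
      x ^ m / m ! * ∫ θ in (0:ℝ)..π, cos θ ^ m := by
    rw [← intervalIntegral.integral_const_mul]
    congr 1 with θ
    ring
  simp only [hterm] at hexp
  have heven := hasSum_two_mul_of_odd_eq_zero hexp fun n ↦ by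
    rw [integral_cos_pow_two_mul_add_one, mul_zero]
  rw [besselI0, one_div_mul_eq_div]
  refine (heven.div_const π).congr_fun fun k ↦ ?_
  rw [integral_cos_pow_two_mul, pow_mul, div_pow]
  field_simp

theorem integral_pow_two_mul_mul_one_sub_sq_pow (n k : ℕ) :
    ∫ t in (-1:ℝ)..1, t ^ (2 * n) * (1 - t ^ 2) ^ k =
      (2 * 4 ^ k * k ! * (2 * n)! * (n + k)! / (n ! * (2 * (n + k) + 1)!) : ℝ) := by
  induction k generalizing n with
  | zero =>
    simp only [pow_zero, mul_one, integral_pow, one_pow, Odd.neg_one_pow (odd_two_mul_add_one n)]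
    rw [show 2 * (n + 0) + 1 = 2 * n + 1 by omega, factorial_succ]
    push_cast
    field_simp
    norm_num
  | succ k ih =>
    have hsplit : ∫ t in (-1:ℝ)..1, t ^ (2 * n) * (1 - t ^ 2) ^ (k + 1) =
        (∫ t in (-1:ℝ)..1, t ^ (2 * n) * (1 - t ^ 2) ^ k) -
          ∫ t in (-1:ℝ)..1, t ^ (2 * (n + 1)) * (1 - t ^ 2) ^ k := by
      rw [← intervalIntegral.integral_sub (by apply Continuous.intervalIntegrable; fun_prop)
        (by apply Continuous.intervalIntegrable; fun_prop)]
      congr 1 with t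
      ring
    rw [hsplit, ih n, ih (n + 1), show n + 1 + k = n + k + 1 by omega,
      show n + (k + 1) = n + k + 1 by omega, show 2 * (n + 1) = 2 * n + 1 + 1 by omega,
      show 2 * (n + k + 1) + 1 = 2 * (n + k) + 1 + 1 + 1 by omega]
    simp only [factorial_succ]
    push_cast
    field_simp
    ring

theorem integral_pow_two_mul_add_one_mul_one_sub_sq_pow (n k : ℕ) :
    ∫ t in (-1:ℝ)..1, t ^ (2 * n + 1) * (1 - t ^ 2) ^ k = 0 := by
  have h := intervalIntegral.integral_comp_neg (a := -1) (b := 1)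
    fun t : ℝ ↦ t ^ (2 * n + 1) * (1 - t ^ 2) ^ k
  simp only [neg_neg, Odd.neg_pow (odd_two_mul_add_one n), even_two.neg_pow, neg_mul,
    intervalIntegral.integral_neg] at h
  linarith

/-- The `(k, m)` term of the product of the series of `I₀(b √(1 - t²))` and of `exp (i ω t)`. -/
noncomputable def kaiserBesselTerm (b ω : ℝ) (p : ℕ × ℕ) (t : ℝ) : ℂ :=
  (((b ^ 2 / 4) ^ p.1 / (p.1 ! : ℝ) ^ 2 * (1 - t ^ 2) ^ p.1 : ℝ) : ℂ) *
    ((Complex.I * ω * t) ^ p.2 / p.2 !)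

theorem norm_kaiserBesselTerm_le (b ω : ℝ) (p : ℕ × ℕ) {t : ℝ} (ht : |t| ≤ 1) :
    ‖kaiserBesselTerm b ω p t‖ ≤ (b ^ 2 / 4) ^ p.1 / (p.1 ! : ℝ) ^ 2 * (|ω| ^ p.2 / p.2 !) := by
  have h1 : 0 ≤ 1 - t ^ 2 := by nlinarith [abs_nonneg t, sq_abs t]
  have h2 : 1 - t ^ 2 ≤ 1 := by nlinarith
  simp only [kaiserBesselTerm, norm_mul, norm_div, norm_pow, Complex.norm_real,
    Complex.norm_natCast, Complex.norm_I, one_mul, Real.norm_eq_abs, abs_of_nonneg h1, sq_abs,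
    Nat.abs_cast, abs_of_pos (show (0:ℝ) < 4 by norm_num)]
  gcongr
  · exact mul_le_of_le_one_right (by positivity) (pow_le_one₀ h1 h2)
  · exact mul_le_of_le_one_right (abs_nonneg ω) ht

theorem summable_kaiserBesselTerm_majorant (b ω : ℝ) :
    Summable fun p : ℕ × ℕ ↦ (b ^ 2 / 4) ^ p.1 / (p.1 ! : ℝ) ^ 2 * (|ω| ^ p.2 / p.2 !) :=
  (hasSum_besselI0 b).summable.mul_of_nonneg (Real.summable_pow_div_factorial |ω|)
    (fun k ↦ by positivity) fun m ↦ by positivity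

theorem hasSum_kaiserBesselTerm (b ω : ℝ) {t : ℝ} (ht : |t| ≤ 1) :
    HasSum (fun p ↦ kaiserBesselTerm b ω p t)
      ((besselI0 (b * √(1 - t ^ 2)) : ℂ) * Complex.exp (Complex.I * ω * t)) := by
  have hI : HasSum (fun k ↦ (((b ^ 2 / 4) ^ k / (k ! : ℝ) ^ 2 * (1 - t ^ 2) ^ k : ℝ) : ℂ))
      (besselI0 (b * √(1 - t ^ 2))) := by
    refine Complex.hasSum_ofReal.mpr ((hasSum_besselI0 _).congr_fun fun k ↦ ?_)
    rw [mul_pow, sq_sqrt (by nlinarith [abs_nonneg t, sq_abs t]), mul_div_right_comm, mul_pow,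
      mul_div_right_comm]
  have hE : HasSum (fun m ↦ (Complex.I * ω * t) ^ m / m !) (Complex.exp (Complex.I * ω * t)) := by
    simpa [Complex.exp_eq_exp_ℂ] using NormedSpace.expSeries_div_hasSum_exp (Complex.I * ω * t)
  have hsum : Summable fun p ↦ kaiserBesselTerm b ω p t :=
    (summable_kaiserBesselTerm_majorant b ω).of_norm_bounded
      fun p ↦ norm_kaiserBesselTerm_le b ω p ht
  have hprod := hI.mul hE hsum
  unfold kaiserBesselTerm
  exact hprod

theorem integral_kaiserBesselTerm (b ω : ℝ) (p : ℕ × ℕ) :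
    ∫ t in (-1:ℝ)..1, kaiserBesselTerm b ω p t = (Complex.I * ω) ^ p.2 / p.2 ! *
      (((b ^ 2 / 4) ^ p.1 / (p.1 ! : ℝ) ^ 2 *
        ∫ t in (-1:ℝ)..1, t ^ p.2 * (1 - t ^ 2) ^ p.1 : ℝ) : ℂ) := by
  rw [← intervalIntegral.integral_const_mul, ← intervalIntegral.integral_ofReal,
    ← intervalIntegral.integral_const_mul]
  congr 1 with t
  simp only [kaiserBesselTerm]
  push_cast
  ring

theorem integral_kaiserBesselTerm_two_mul_add_one (b ω : ℝ) (k n : ℕ) :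
    ∫ t in (-1:ℝ)..1, kaiserBesselTerm b ω (k, 2 * n + 1) t = 0 := by
  rw [integral_kaiserBesselTerm, integral_pow_two_mul_add_one_mul_one_sub_sq_pow, mul_zero,
    Complex.ofReal_zero, mul_zero]

theorem integral_kaiserBesselTerm_two_mul (b ω : ℝ) (k n : ℕ) :
    ∫ t in (-1:ℝ)..1, kaiserBesselTerm b ω (k, 2 * n) t =
      ((2 * ((k + n).choose k * ((b ^ 2) ^ k * (-ω ^ 2) ^ n)) / (2 * (k + n) + 1)! : ℝ) : ℂ) := by
  have hI : (Complex.I * ω) ^ (2 * n) = ((-ω ^ 2) ^ n : ℝ) := by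
    rw [pow_mul, mul_pow, Complex.I_sq]; push_cast; ring
  rw [integral_kaiserBesselTerm, hI, integral_pow_two_mul_mul_one_sub_sq_pow,
    Nat.cast_choose ℝ (Nat.le_add_right k n), Nat.add_sub_cancel_left, add_comm n k, div_pow]
  have h2n : ((2 * n)! : ℂ) ≠ 0 := Nat.cast_ne_zero.mpr (factorial_ne_zero _)
  push_cast
  field_simp

theorem hasSum_integral_kaiserBesselTerm (b ω : ℝ) :
    HasSum (fun p ↦ ∫ t in (-1:ℝ)..1, kaiserBesselTerm b ω p t)
      (∫ t in (-1:ℝ)..1, (besselI0 (b * √(1 - t ^ 2)) : ℂ) * Complex.exp (Complex.I * ω * t)) := by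
  have habs {t : ℝ} (ht : t ∈ Set.uIcc (-1:ℝ) 1) : |t| ≤ 1 := by
    rwa [Set.uIcc_of_le (by norm_num), Set.mem_Icc, ← abs_le] at ht
  exact hasSum_intervalIntegral_of_summable_bound (fun p ↦ by unfold kaiserBesselTerm; fun_prop)
    (summable_kaiserBesselTerm_majorant b ω) (fun p t ht ↦ norm_kaiserBesselTerm_le b ω p (habs ht))
    (fun t ht ↦ hasSum_kaiserBesselTerm b ω (habs ht))

theorem hasSum_integral_besselI0_mul_cexp (b ω : ℝ) :
    HasSum (fun j ↦ ((2 * ((b ^ 2 - ω ^ 2) ^ j / (2 * j + 1)!) : ℝ) : ℂ))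
      (∫ t in (-1:ℝ)..1, (besselI0 (b * √(1 - t ^ 2)) : ℂ) * Complex.exp (Complex.I * ω * t)) := by
  have heven := hasSum_prodMap_two_mul_of_odd_eq_zero (hasSum_integral_kaiserBesselTerm b ω)
    (integral_kaiserBesselTerm_two_mul_add_one b ω)
  refine heven.sum_antidiagonal.congr_fun fun j ↦ ?_
  rw [sub_eq_add_neg, (Commute.all _ _).add_pow', Finset.sum_div, Finset.mul_sum,
    Complex.ofReal_sum]
  refine Finset.sum_congr rfl fun p hp ↦ ?_
  rw [integral_kaiserBesselTerm_two_mul, mem_antidiagonal.mp hp, nsmul_eq_mul]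
  simp only [mul_div_assoc]

theorem kaiser_bessel_fourier_transform_general (b : ℝ) (ω : ℝ) :
    (∫ t in (-1:ℝ)..1, (besselI0 (b * Real.sqrt (1 - t ^ 2)) : ℂ) *
        Complex.exp (Complex.I * ω * t)) =
      ((if b ^ 2 ≤ ω ^ 2 then 2 * _root_.sinc (Real.sqrt (ω ^ 2 - b ^ 2))
        else 2 * Real.sinh (Real.sqrt (b ^ 2 - ω ^ 2)) / Real.sqrt (b ^ 2 - ω ^ 2) : ℝ) : ℂ) := by
  refine (hasSum_integral_besselI0_mul_cexp b ω).unique (Complex.hasSum_ofReal.mpr ?_)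
  split_ifs with h
  · have := (Real.hasSum_sinc √(ω ^ 2 - b ^ 2)).mul_left 2
    rw [sq_sqrt (sub_nonneg.mpr h), neg_sub] at this
    -- `_root_.sinc` and `Real.sinc` have the same definition
    exact this
  · have hpos : 0 < b ^ 2 - ω ^ 2 := sub_pos.mpr (not_le.mp h)
    have := (Real.hasSum_sinh_div (sqrt_pos.mpr hpos).ne').mul_left 2
    rwa [sq_sqrt hpos.le, ← mul_div_assoc] at this

/-- Fourier transform of the Kaiser–Bessel bump:
`∫_{-1}^1 I₀(b√(1-t²)) e^{iωt} dt = 2 sinc √(ω²-b²)`, where for `ω² < b²` the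
right-hand side is interpreted as `2 sinh(√(b²-ω²))/√(b²-ω²)`. -/
theorem kaiser_bessel_fourier_transform (b : ℝ) (hb : 0 < b) (ω : ℝ) :
    (∫ t in (-1:ℝ)..1, (besselI0 (b * Real.sqrt (1 - t ^ 2)) : ℂ) *
        Complex.exp (Complex.I * ω * t)) =
      ((if b ^ 2 ≤ ω ^ 2 then 2 * _root_.sinc (Real.sqrt (ω ^ 2 - b ^ 2))
        else 2 * Real.sinh (Real.sqrt (b ^ 2 - ω ^ 2)) / Real.sqrt (b ^ 2 - ω ^ 2) : ℝ) : ℂ) :=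
  kaiser_bessel_fourier_transform_general b ω
end

section
/- Let b, δ > 0, k an integer, and K₀ ≥ 0 with |k| > K₀ + 2b/δ. Define Ψ̂_k(ω) = (b e^{-iδω/2}/sinh b)[(1 - ω/(2k)) sinc √((δ(ω+k)/2)² - b²) + (1 + ω/(2k)) sinc √((δ(ω-k)/2)² - b²)]. Then for all ω with |ω| ≤ K₀, the arguments of both sinc functions are real, and |Ψ̂_k(ω)| ≤ (3b/sinh b) · 1/√((δ(|k|-K₀)/2)² - b²). -/
open Real

/-! For `|ω| ≤ K₀` both `|ω + k|` and `|ω - k|` are at least `c = |k| - K₀ > 2b/δ`, so the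
radicands `(δ(ω ± k)/2)² - b²` dominate `(δc/2)² - b² > 0`, and `|sinc x| ≤ 1/x` bounds each sinc
by `1/√((δc/2)² - b²)`. The prefactor has modulus `b / sinh b`, and `|ω/(2k)| ≤ 1/2` bounds each
weight `1 ± ω/(2k)` by `3/2`. -/

lemma abs_sinc_le_one_div_abs {x : ℝ} (hx : x ≠ 0) : |_root_.sinc x| ≤ 1 / |x| := by
  rw [_root_.sinc, if_neg hx, abs_div]
  gcongr
  exact abs_sin_le_one x

lemma abs_sinc_sqrt_le {s t : ℝ} (hs : 0 < s) (hst : s ≤ t) : |_root_.sinc √t| ≤ 1 / √s := by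
  have hsqrt : 0 < √t := sqrt_pos.2 (hs.trans_le hst)
  calc |_root_.sinc √t| ≤ 1 / |√t| := abs_sinc_le_one_div_abs hsqrt.ne'
    _ = 1 / √t := by rw [abs_of_pos hsqrt]
    _ ≤ 1 / √s := by gcongr

lemma abs_sub_le_abs_add_of_abs_le {x y K : ℝ} (hx : |x| ≤ K) : |y| - K ≤ |x + y| := by
  have := abs_sub_abs_le_abs_sub y (-x)
  rw [abs_neg, sub_neg_eq_add, add_comm] at this
  linarith

lemma mul_div_two_sq_le (δ : ℝ) {c x : ℝ} (hc : 0 ≤ c) (hcx : c ≤ |x|) :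
    (δ * c / 2) ^ 2 ≤ (δ * x / 2) ^ 2 := by
  rw [sq_le_sq, abs_div, abs_div, abs_mul, abs_mul, abs_of_nonneg hc]
  gcongr

lemma sq_mul_div_two_sub_sq_pos {b δ c : ℝ} (hb : 0 ≤ b) (hδ : 0 < δ) (hc : 2 * b / δ < c) :
    0 < (δ * c / 2) ^ 2 - b ^ 2 := by
  have : b < δ * c / 2 := by rw [div_lt_iff₀ hδ] at hc; linarith
  exact sub_pos.2 (pow_lt_pow_left₀ this hb two_ne_zero)

lemma norm_mul_exp_neg_I_mul_div_sinh {b : ℝ} (hb : 0 < b) (z : ℝ) :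
    ‖(b : ℂ) * Complex.exp (-Complex.I * z) / (sinh b : ℂ)‖ = b / sinh b := by
  have : -Complex.I * z = ((-z : ℝ) : ℂ) * Complex.I := by push_cast; ring
  rw [this, norm_div, norm_mul, Complex.norm_exp_ofReal_mul_I, Complex.norm_real,
    Complex.norm_real, norm_of_nonneg hb.le, norm_of_nonneg (sinh_pos_iff.2 hb).le, mul_one]

lemma norm_one_add_le_three_halves {z : ℂ} (hz : ‖z‖ ≤ 1 / 2) : ‖1 + z‖ ≤ 3 / 2 := by
  calc ‖1 + z‖ ≤ ‖(1 : ℂ)‖ + ‖z‖ := norm_add_le _ _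
    _ ≤ 3 / 2 := by rw [norm_one]; linarith

lemma norm_ofReal_div_two_mul_intCast_le {ω : ℝ} {k : ℤ} (h : |ω| ≤ |(k : ℝ)|) :
    ‖(ω : ℂ) / (2 * (k : ℂ))‖ ≤ 1 / 2 := by
  rcases eq_or_ne k 0 with rfl | hk
  · simp
  have hk' : 0 < |(k : ℝ)| := abs_pos.2 (Int.cast_ne_zero.2 hk)
  rw [norm_div, norm_mul, Complex.norm_real, Complex.norm_intCast, Complex.norm_two, norm_eq_abs,
    div_le_div_iff₀ (by positivity) two_pos]
  linarith

lemma norm_mul_add_mul_le {R : Type*} [SeminormedRing R] {u v s t : R} {A M : ℝ}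
    (hu : ‖u‖ ≤ A) (hv : ‖v‖ ≤ A) (hs : ‖s‖ ≤ M) (ht : ‖t‖ ≤ M) :
    ‖u * s + v * t‖ ≤ 2 * (A * M) := by
  have hA : 0 ≤ A := (norm_nonneg u).trans hu
  calc ‖u * s + v * t‖ ≤ ‖u‖ * ‖s‖ + ‖v‖ * ‖t‖ :=
        (norm_add_le _ _).trans (add_le_add (norm_mul_le _ _) (norm_mul_le _ _))
    _ ≤ A * M + A * M := by gcongr
    _ = 2 * (A * M) := by ring

theorem influence_kernel_fourier_bound_general (b δ : ℝ) (hb : 0 < b) (hδ : 0 < δ)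
    (k : ℤ) (K₀ : ℝ) (hk : K₀ + 2 * b / δ < |(k : ℝ)|)
    (ω : ℝ) (hω : |ω| ≤ K₀) :
    0 < (δ * (ω + k) / 2) ^ 2 - b ^ 2 ∧
    0 < (δ * (ω - k) / 2) ^ 2 - b ^ 2 ∧
    ‖
        (((b : ℂ) * Complex.exp (-Complex.I * (δ * ω / 2)) / (Real.sinh b : ℂ)) *
          ((1 - (ω : ℂ) / (2 * (k : ℂ))) *
              (_root_.sinc (Real.sqrt ((δ * (ω + k) / 2) ^ 2 - b ^ 2)) : ℝ) +
           (1 + (ω : ℂ) / (2 * (k : ℂ))) *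
              (_root_.sinc (Real.sqrt ((δ * (ω - k) / 2) ^ 2 - b ^ 2)) : ℝ)))‖ ≤
      (3 * b / Real.sinh b) *
        (1 / Real.sqrt ((δ * (|(k : ℝ)| - K₀) / 2) ^ 2 - b ^ 2)) := by
  have hgap : 2 * b / δ < |(k : ℝ)| - K₀ := by linarith
  have hc : 0 ≤ |(k : ℝ)| - K₀ := by linarith [show 0 < 2 * b / δ by positivity]
  have hT := sq_mul_div_two_sub_sq_pos hb.le hδ hgap
  have hplus := sub_le_sub_right
    (mul_div_two_sq_le δ hc (abs_sub_le_abs_add_of_abs_le (y := k) hω)) (b ^ 2)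
  have hminus := sub_le_sub_right (mul_div_two_sq_le δ hc (x := ω - k)
    (by simpa [sub_eq_add_neg] using abs_sub_le_abs_add_of_abs_le (y := -(k : ℝ)) hω)) (b ^ 2)
  refine ⟨hT.trans_le hplus, hT.trans_le hminus, ?_⟩
  have hωk : ‖(ω : ℂ) / (2 * (k : ℂ))‖ ≤ 1 / 2 := norm_ofReal_div_two_mul_intCast_le (by linarith)
  have hsub : ‖1 - (ω : ℂ) / (2 * (k : ℂ))‖ ≤ 3 / 2 := by
    rw [sub_eq_add_neg]; exact norm_one_add_le_three_halves (by rwa [norm_neg])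
  have hprefactor : ‖(b : ℂ) * Complex.exp (-Complex.I * (δ * ω / 2)) / (sinh b : ℂ)‖ =
      b / sinh b := by
    simpa only [Complex.ofReal_mul, Complex.ofReal_div, Complex.ofReal_ofNat] using
      norm_mul_exp_neg_I_mul_div_sinh hb (δ * ω / 2)
  rw [norm_mul, hprefactor]
  calc _ ≤ b / sinh b * (2 * (3 / 2 * (1 / √((δ * (|(k : ℝ)| - K₀) / 2) ^ 2 - b ^ 2)))) := by
        gcongr
        exact norm_mul_add_mul_le hsub (norm_one_add_le_three_halves hωk)
          (by simpa using abs_sinc_sqrt_le hT hplus) (by simpa using abs_sinc_sqrt_le hT hminus)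
    _ = _ := by ring

/-- Bound on the Fourier transform of the influence kernel: for `|k| > K₀ + 2b/δ`
and `|ω| ≤ K₀`, both sinc arguments are real (their squared arguments are positive)
and `|Ψ̂_k(ω)| ≤ (3b/sinh b)/√((δ(|k|-K₀)/2)² - b²)`. -/
theorem influence_kernel_fourier_bound (b δ : ℝ) (hb : 0 < b) (hδ : 0 < δ)
    (k : ℤ) (K₀ : ℝ) (hK₀ : 0 ≤ K₀) (hk : K₀ + 2 * b / δ < |(k : ℝ)|)
    (ω : ℝ) (hω : |ω| ≤ K₀) :
    0 < (δ * (ω + k) / 2) ^ 2 - b ^ 2 ∧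
    0 < (δ * (ω - k) / 2) ^ 2 - b ^ 2 ∧
    ‖
        (((b : ℂ) * Complex.exp (-Complex.I * (δ * ω / 2)) / (Real.sinh b : ℂ)) *
          ((1 - (ω : ℂ) / (2 * (k : ℂ))) *
              (_root_.sinc (Real.sqrt ((δ * (ω + k) / 2) ^ 2 - b ^ 2)) : ℝ) +
           (1 + (ω : ℂ) / (2 * (k : ℂ))) *
              (_root_.sinc (Real.sqrt ((δ * (ω - k) / 2) ^ 2 - b ^ 2)) : ℝ)))‖ ≤
      (3 * b / Real.sinh b) *
        (1 / Real.sqrt ((δ * (|(k : ℝ)| - K₀) / 2) ^ 2 - b ^ 2)) :=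
  influence_kernel_fourier_bound_general b δ hb hδ k K₀ hk ω hω
end
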